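/- Let R = {v₁,…,vₙ} be a set of strings of length k over an alphabet of size m, with Vᵢ the vectorized one-hot encoding of vᵢ. Then R is a resolving set of the Hamming graph H(k,m) if and only if there is no nonzero z : (Fin k × Fin m) → ℤ with ⟨Vᵢ, z⟩ = 0 for all i, such that for each j : Fin k, the block (z (j, 0), …, z (j, m-1)) is either identically zero or contains exactly one entry equal to 1, exactly one entry equal to -1, and all other entries equal to 0. -/

import Mathlib

/-!
`⟨oneHot w, oneHot x⟩` counts the positions where `w` and `x` agree, i.e. it is `k - d(w, x)`.
Hence `d(w, x) = d(w, y)` exactly when `oneHot w` is orthogonal to `oneHot x - oneHot y`, and the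
vectors with the prescribed block shape are precisely these differences: a zero block where
`x j = y j`, a `+1`/`-1` pair where they differ.
-/

open Finset

variable {ι α : Type*} [DecidableEq α]

def oneHot (x : ι → α) (p : ι × α) : ℤ := if x p.1 = p.2 then 1 else 0

lemma sum_oneHot_mul_oneHot [Fintype ι] [Fintype α] (w x : ι → α) :
    ∑ p, oneHot w p * oneHot x p = (Fintype.card ι : ℤ) - hammingDist w x := by
  have hblock (j : ι) : ∑ i, oneHot w (j, i) * oneHot x (j, i) = if w j = x j then 1 else 0 := by
    rw [Finset.sum_eq_single (w j)] <;> simp_all [oneHot, eq_comm]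
  have hsplit := Finset.card_filter_add_card_filter_not (s := univ) (fun j : ι => w j = x j)
  rw [Fintype.sum_prod_type]
  simp only [hblock, Finset.sum_boole, hammingDist, card_univ, ne_eq] at hsplit ⊢
  omega

lemma sum_oneHot_mul_oneHot_sub [Fintype ι] [Fintype α] (w x y : ι → α) :
    ∑ p, oneHot w p * (oneHot x p - oneHot y p) = (hammingDist w y : ℤ) - hammingDist w x := by
  simp only [mul_sub, Finset.sum_sub_distrib, sum_oneHot_mul_oneHot]
  ring

lemma oneHot_sub_oneHot_eq_zero_iff {x y : ι → α} : oneHot x - oneHot y = 0 ↔ x = y := by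
  refine ⟨fun h => funext fun j => ?_, fun h => by rw [h, sub_self]⟩
  have := congrFun h (j, x j)
  by_contra hne
  simp [oneHot, Ne.symm hne] at this

def IsZeroOrPlusMinus (g : α → ℤ) : Prop :=
  (∀ i, g i = 0) ∨
    ∃ p q, p ≠ q ∧ g p = 1 ∧ g q = -1 ∧ ∀ r, r ≠ p → r ≠ q → g r = 0

lemma isZeroOrPlusMinus_ite_sub_ite (a b : α) :
    IsZeroOrPlusMinus fun i => (if a = i then (1 : ℤ) else 0) - (if b = i then 1 else 0) := by
  by_cases hab : a = b
  · exact .inl fun i => by simp [hab]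
  · refine .inr ⟨a, b, hab, by simp [Ne.symm hab], by simp [hab], fun r hra hrb => ?_⟩
    simp [Ne.symm hra, Ne.symm hrb]

lemma IsZeroOrPlusMinus.exists_eq_ite_sub_ite [Nonempty α] {g : α → ℤ}
    (hg : IsZeroOrPlusMinus g) :
    ∃ a b : α, ∀ i, g i = (if a = i then 1 else 0) - (if b = i then 1 else 0) := by
  rcases hg with hzero | ⟨p, q, hpq, hp, hq, hrest⟩
  · obtain ⟨a⟩ := ‹Nonempty α›
    exact ⟨a, a, fun i => by simp [hzero i]⟩
  · refine ⟨p, q, fun i => ?_⟩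
    by_cases hip : i = p
    · subst hip; simp [hp, Ne.symm hpq]
    by_cases hiq : i = q
    · subst hiq; simp [hq, hpq]
    simp [hrest i hip hiq, Ne.symm hip, Ne.symm hiq]

lemma exists_eq_oneHot_sub_oneHot [Nonempty α] {z : ι × α → ℤ}
    (hz : ∀ j, IsZeroOrPlusMinus fun i => z (j, i)) : ∃ x y : ι → α, z = oneHot x - oneHot y := by
  choose x y hxy using fun j => (hz j).exists_eq_ite_sub_ite
  exact ⟨x, y, funext fun p => hxy p.1 p.2⟩

theorem resolving_iff_no_nontrivial_solution (k m n : ℕ) (v : Fin n → (Fin k → Fin m))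
    (V : Fin n → (Fin k × Fin m) → ℤ)
    (hV : ∀ i p, V i p = if v i p.1 = p.2 then 1 else 0) :
    (∀ x y : Fin k → Fin m, x ≠ y → ∃ i, hammingDist (v i) x ≠ hammingDist (v i) y) ↔
    ¬ ∃ z : (Fin k × Fin m) → ℤ, z ≠ 0 ∧ (∀ i, ∑ p, V i p * z p = 0) ∧
      (∀ j : Fin k, (∀ i : Fin m, z (j, i) = 0) ∨
        (∃ p q : Fin m, p ≠ q ∧ z (j, p) = 1 ∧ z (j, q) = -1 ∧
          ∀ r : Fin m, r ≠ p → r ≠ q → z (j, r) = 0)) := by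
  obtain rfl : V = fun i => oneHot (v i) := funext fun i => funext (hV i)
  have horth (x y : Fin k → Fin m) (i : Fin n) :
      ∑ p, oneHot (v i) p * (oneHot x - oneHot y) p = 0 ↔
        hammingDist (v i) x = hammingDist (v i) y := by
    rw [← sub_eq_zero, ← Int.natCast_inj, Pi.sub_def, sum_oneHot_mul_oneHot_sub]
    omega
  constructor
  · rintro hres ⟨z, hz0, hzV, hblocks⟩
    obtain ⟨p, -⟩ := Function.ne_iff.mp hz0
    have : Nonempty (Fin m) := ⟨p.2⟩
    obtain ⟨x, y, rfl⟩ := exists_eq_oneHot_sub_oneHot hblocks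
    obtain ⟨i, hi⟩ := hres x y (mt oneHot_sub_oneHot_eq_zero_iff.mpr hz0)
    exact hi ((horth x y i).mp (hzV i))
  · intro hno x y hxy
    by_contra! hsame
    exact hno ⟨oneHot x - oneHot y, mt oneHot_sub_oneHot_eq_zero_iff.mp hxy,
      fun i => (horth x y i).mpr (hsame i), fun j => isZeroOrPlusMinus_ite_sub_ite (x j) (y j)⟩
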